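/- Let D be a division ring, X, Y ∈ Dˣ, and (R, C) a solution of the non-commutative (1,4)-system with commutator C and initial data C = X Y X⁻¹ Y⁻¹, R₁ = Y X Y⁻¹, R₂ = Y. Then for all n ≥ 1, u_n := R_{2n} belongs to the subsemiring of D generated by {X, X⁻¹, Y, Y⁻¹}; that is, R_{2n} is a non-commutative Laurent polynomial in X and Y with non-negative integer coefficients. -/
import Mathlib

private theorem onefour_aux {D : Type*} [DivisionRing D] (x x' y y' t t' : D)
    (hxx' : x * x' = 1) (hx'x : x' * x = 1) (hyy' : y * y' = 1) (hy'y : y' * y = 1)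
    (ht : t = x * y * x' * y') (ht' : t' = y * x * y' * x')
    (u : ℤ → D)
    (hinv : ∀ n : ℤ, t * u n * u (n + 1) - 1 ≠ 0)
    (hQ : ∀ n : ℤ, u n * u (n + 1) = u (n + 1) * t * u n + t' - 1)
    (hE : ∀ n : ℤ, u (n + 1) * (t * u (n - 1) * u n - 1) = u n * u n * u n + t * u (n - 1))
    (hE' : ∀ n : ℤ, u n * u (n + 1) * t * u (n - 1) - u (n + 1) * t
      = u n * u n * u n + u (n - 1))
    (hu0 : u 0 = y * x * y' * x' * y' + y * x * y' * y')
    (hu1 : u 1 = y)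
    (hu2 : u 2 = x * y' * x' + y' * x' + y * y * y * x') :
    ∀ n : ℤ, 1 ≤ n → u n ∈ Subsemiring.closure ({x, x', y, y'} : Set D) := by
  have sx : ∀ z : D, x * (x' * z) = z := fun z => by rw [← mul_assoc, hxx', one_mul]
  have sx' : ∀ z : D, x' * (x * z) = z := fun z => by rw [← mul_assoc, hx'x, one_mul]
  have sy : ∀ z : D, y * (y' * z) = z := fun z => by rw [← mul_assoc, hyy', one_mul]
  have sy' : ∀ z : D, y' * (y * z) = z := fun z => by rw [← mul_assoc, hy'y, one_mul]
  set S := Subsemiring.closure ({x, x', y, y'} : Set D) with hSdef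
  have hxS : x ∈ S := Subsemiring.subset_closure (by simp)
  have hx'S : x' ∈ S := Subsemiring.subset_closure (by simp)
  have hyS : y ∈ S := Subsemiring.subset_closure (by simp)
  have hy'S : y' ∈ S := Subsemiring.subset_closure (by simp)
  set p : D := y * y * y * x' * y' with hp
  set b0 : D := (1 + x) * y' * (1 + x') * y' with hb0
  set q : D := y * x' * y' + y' * x' * y * y * x' * y' + x * y' * x' * y * y * x' * y' with hq0
  set k : D := b0 + p with hk
  have hpS : p ∈ S := by
    rw [hp]; exact mul_mem (mul_mem (mul_mem (mul_mem hyS hyS) hyS) hx'S) hy'S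
  have hb0S : b0 ∈ S := by
    rw [hb0]
    exact mul_mem (mul_mem (mul_mem (add_mem (one_mem S) hxS) hy'S)
      (add_mem (one_mem S) hx'S)) hy'S
  have hqS : q ∈ S := by
    rw [hq0]
    refine add_mem (add_mem ?_ ?_) ?_
    · exact mul_mem (mul_mem hyS hx'S) hy'S
    · exact mul_mem (mul_mem (mul_mem (mul_mem (mul_mem hy'S hx'S) hyS) hyS) hx'S) hy'S
    · exact mul_mem (mul_mem (mul_mem (mul_mem (mul_mem (mul_mem hxS hy'S) hx'S) hyS) hyS)
        hx'S) hy'S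
  have hqmul : b0 * p = t + q := by
    rw [hb0, hp, hq0, ht]
    simp only [mul_add, add_mul, mul_assoc, one_mul, mul_one, sx, sx', sy, sy',
      hxx', hx'x, hyy', hy'y]
    abel
  have main : ∀ n : ℤ, 1 ≤ n →
      ((u (n + 1) + t * u (n - 1) = k * u n) ∧
       (u n * k = u (n + 1) * t + u (n - 1)) ∧
       (t * u n * t * u n + k * t' = t * u (n - 1) * u (n + 1)) ∧
       u n ∈ S ∧
       u (n + 1) - p * u n ∈ S) := by
    refine Int.le_induction ?_ ?_
    · have e11 : (1 : ℤ) + 1 = 2 := by norm_num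
      have e10 : (1 : ℤ) - 1 = 0 := by norm_num
      rw [e11, e10]
      refine ⟨?_, ?_, ?_, ?_, ?_⟩
      · rw [hu2, hu1, hu0, hk, hb0, hp, ht]
        simp only [mul_add, add_mul, mul_assoc, one_mul, mul_one, sx, sx', sy, sy',
          hxx', hx'x, hyy', hy'y]
        abel
      · rw [hu2, hu1, hu0, hk, hb0, hp, ht]
        simp only [mul_add, add_mul, mul_assoc, one_mul, mul_one, sx, sx', sy, sy',
          hxx', hx'x, hyy', hy'y]
        abel
      · rw [hu2, hu1, hu0, hk, hb0, hp, ht, ht']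
        simp only [mul_add, add_mul, mul_assoc, one_mul, mul_one, sx, sx', sy, sy',
          hxx', hx'x, hyy', hy'y]
        abel
      · rw [hu1]; exact hyS
      · have e : u 2 - p * u 1 = x * (y' * x') + y' * x' := by
          rw [hu2, hu1, hp]
          simp only [mul_add, add_mul, mul_assoc, one_mul, mul_one, sx, sx', sy, sy',
            hxx', hx'x, hyy', hy'y]
          abel
        rw [e]
        exact add_mem (mul_mem hxS (mul_mem hy'S hx'S)) (mul_mem hy'S hx'S)
    · rintro n hn ⟨hA, hA', hS', hMu, hMw⟩
      have en2 : n + 1 + 1 = n + 2 := by ring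
      have en0 : n + 1 - 1 = n := by ring
      rw [en2, en0]
      have hEn : u (n + 2) * (t * u n * u (n + 1) - 1)
          = u (n + 1) * u (n + 1) * u (n + 1) + t * u n := by
        have h := hE (n + 1); rw [en2, en0] at h; exact h
      have hE'n : u (n + 1) * u (n + 2) * t * u n - u (n + 2) * t
          = u (n + 1) * u (n + 1) * u (n + 1) + u n := by
        have h := hE' (n + 1); rw [en2, en0] at h; exact h
      have zE := sub_eq_zero_of_eq hEn
      have zE' := sub_eq_zero_of_eq hE'n
      have zQ := sub_eq_zero_of_eq (hQ n)
      have zS := sub_eq_zero_of_eq hS'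
      have zA := sub_eq_zero_of_eq hA
      have zA' := sub_eq_zero_of_eq hA'
      have key1 : (u (n + 2) + t * u n - k * u (n + 1)) * (t * u n * u (n + 1) - 1)
          = (u (n + 2) * (t * u n * u (n + 1) - 1)
              - (u (n + 1) * u (n + 1) * u (n + 1) + t * u n))
            + k * (u n * u (n + 1) - (u (n + 1) * t * u n + t' - 1)) * u (n + 1)
            + (t * u n * t * u n + k * t' - t * u (n - 1) * u (n + 1)) * u (n + 1)
            + (u (n + 1) + t * u (n - 1) - k * u n) * (u (n + 1) * u (n + 1)) := by
        noncomm_ring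
      rw [zE, zQ, zS, zA] at key1
      simp only [mul_zero, zero_mul, add_zero, zero_add] at key1
      have hA1 : u (n + 2) + t * u n = k * u (n + 1) :=
        sub_eq_zero.mp ((mul_eq_zero.mp key1).resolve_right (hinv n))
      have zA1 := sub_eq_zero_of_eq hA1
      have key2 : u (n + 2) * t * u n - (u (n + 1) * u (n + 1) + k)
          = (u (n + 2) + t * u n - k * u (n + 1)) * (t * u n)
            - k * (u n * u (n + 1) - (u (n + 1) * t * u n + t' - 1))
            - (t * u n * t * u n + k * t' - t * u (n - 1) * u (n + 1))
            - (u (n + 1) + t * u (n - 1) - k * u n) * u (n + 1) := by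
        noncomm_ring
      rw [zA1, zQ, zS, zA] at key2
      simp only [mul_zero, zero_mul, sub_zero] at key2
      have hdtb : u (n + 2) * t * u n = u (n + 1) * u (n + 1) + k := sub_eq_zero.mp key2
      have zdtb := sub_eq_zero_of_eq hdtb
      have key3 : u (n + 1) * k - (u (n + 2) * t + u n)
          = (u (n + 1) * u (n + 2) * t * u n - u (n + 2) * t
              - (u (n + 1) * u (n + 1) * u (n + 1) + u n))
            - u (n + 1) * (u (n + 2) * t * u n - (u (n + 1) * u (n + 1) + k)) := by
        noncomm_ring
      rw [zE', zdtb] at key3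
      simp only [mul_zero, sub_zero, zero_sub, neg_zero] at key3
      have hA'1 : u (n + 1) * k = u (n + 2) * t + u n := sub_eq_zero.mp key3
      have key4 : (t * u (n + 1) * t * u (n + 1) + k * t') - t * u n * u (n + 2)
          = -((t * u n) * (u (n + 2) + t * u n - k * u (n + 1)))
            + (t * u n * t * u n + k * t' - t * u (n - 1) * u (n + 1))
            - t * (u n * k - (u (n + 1) * t + u (n - 1))) * u (n + 1) := by
        noncomm_ring
      rw [zA1, zS, zA'] at key4
      simp only [mul_zero, zero_mul, neg_zero, add_zero, zero_add, sub_zero] at key4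
      have hS1 : t * u (n + 1) * t * u (n + 1) + k * t' = t * u n * u (n + 2) :=
        sub_eq_zero.mp key4
      have hMu1 : u (n + 1) ∈ S := by
        have e : u (n + 1) = p * u n + (u (n + 1) - p * u n) := by abel
        rw [e]; exact add_mem (mul_mem hpS hMu) hMw
      have hMw1 : u (n + 2) - p * u (n + 1) ∈ S := by
        have zk : k - (b0 + p) = 0 := sub_eq_zero_of_eq hk
        have zq : b0 * p - (t + q) = 0 := sub_eq_zero_of_eq hqmul
        have key5 : (u (n + 2) - p * u (n + 1)) - (b0 * (u (n + 1) - p * u n) + q * u n)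
            = (u (n + 2) + t * u n - k * u (n + 1)) + (k - (b0 + p)) * u (n + 1)
              + (b0 * p - (t + q)) * u n := by
          noncomm_ring
        rw [zA1, zk, zq] at key5
        simp only [zero_mul, add_zero, zero_add] at key5
        have e := sub_eq_zero.mp key5
        rw [e]
        exact add_mem (mul_mem hb0S hMw) (mul_mem hqS hMu)
      exact ⟨hA1, hA'1, hS1, hMu1, hMw1⟩
  exact fun n hn => (main n hn).2.2.2.1

/-- A solution of the non-commutative `(1,4)`-system with commutator `C`. -/
def IsOneFourSolution {D : Type*} [DivisionRing D] (R : ℤ → Dˣ) (C : Dˣ) : Prop :=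
  (∀ n : ℤ, (C : D) =
      (((R (n + 1))⁻¹ : Dˣ) : D) * (R n : D) * (R (n + 1) : D) * (((R n)⁻¹ : Dˣ) : D)) ∧
  (∀ n : ℤ, (R (2 * n) : D) * (C : D) * (R (2 * n - 2) : D) = 1 + (R (2 * n - 1) : D)) ∧
  (∀ n : ℤ, (R (2 * n + 1) : D) * (C : D) * (R (2 * n - 1) : D) = 1 + (R (2 * n) : D) ^ 4)

/-- Positivity of the even variables of the `(1,4)`-system in the `(X,Y)` initial data:
`u_n = R_{2n}` is, for all `n ≥ 1`, a non-commutative Laurent polynomial in `X, Y` with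
non-negative integer coefficients. -/
theorem onefour_even_positivity_XY {D : Type*} [DivisionRing D] (X Y : Dˣ)
    (R : ℤ → Dˣ) (C : Dˣ) (h : IsOneFourSolution R C)
    (hC : C = X * Y * X⁻¹ * Y⁻¹) (hR1 : R 1 = Y * X * Y⁻¹) (hR2 : R 2 = Y) :
    ∀ n : ℤ, 1 ≤ n →
      (R (2 * n) : D) ∈ Subsemiring.closure
        ({(X : D), ((X⁻¹ : Dˣ) : D), (Y : D), ((Y⁻¹ : Dˣ) : D)} : Set D) := by
  obtain ⟨h1, h2, h3⟩ := h
  -- cancellation helpers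
  have sX : ∀ z : D, (X : D) * (((X⁻¹ : Dˣ) : D) * z) = z := fun z => by
    rw [← mul_assoc, Units.mul_inv, one_mul]
  have sX' : ∀ z : D, ((X⁻¹ : Dˣ) : D) * ((X : D) * z) = z := fun z => by
    rw [← mul_assoc, Units.inv_mul, one_mul]
  have sY : ∀ z : D, (Y : D) * (((Y⁻¹ : Dˣ) : D) * z) = z := fun z => by
    rw [← mul_assoc, Units.mul_inv, one_mul]
  have sY' : ∀ z : D, ((Y⁻¹ : Dˣ) : D) * ((Y : D) * z) = z := fun z => by
    rw [← mul_assoc, Units.inv_mul, one_mul]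
  have htv : (C : D) = (X : D) * (Y : D) * ((X⁻¹ : Dˣ) : D) * ((Y⁻¹ : Dˣ) : D) := by
    rw [hC]; simp [Units.val_mul]
  have ht'v : ((C⁻¹ : Dˣ) : D) = (Y : D) * (X : D) * ((Y⁻¹ : Dˣ) : D) * ((X⁻¹ : Dˣ) : D) := by
    have e : (C : D) * ((Y : D) * (X : D) * ((Y⁻¹ : Dˣ) : D) * ((X⁻¹ : Dˣ) : D)) = 1 := by
      rw [htv]
      simp only [mul_assoc, sX, sX', sY, sY', Units.mul_inv, Units.inv_mul, mul_one, one_mul]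
    calc ((C⁻¹ : Dˣ) : D)
        = ((C⁻¹ : Dˣ) : D) * ((C : D) * ((Y : D) * (X : D) * ((Y⁻¹ : Dˣ) : D) * ((X⁻¹ : Dˣ) : D))) := by
          rw [e, mul_one]
      _ = (Y : D) * (X : D) * ((Y⁻¹ : Dˣ) : D) * ((X⁻¹ : Dˣ) : D) := by
          rw [← mul_assoc, Units.inv_mul, one_mul]
  have hcomm : ∀ m : ℤ, (R m : D) * (R (m + 1) : D) = (R (m + 1) : D) * (C : D) * (R m : D) := by
    intro m
    rw [h1 m]
    simp only [mul_assoc, Units.inv_mul_cancel_left, Units.mul_inv_cancel_left,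
      Units.inv_mul, Units.mul_inv, mul_one, one_mul]
  have heven' : ∀ m : ℤ,
      (R (2 * (m + 1)) : D) * (C : D) * (R (2 * m) : D) = 1 + (R (2 * m + 1) : D) := by
    intro m
    have hh := h2 (m + 1)
    rw [show 2 * (m + 1) - 2 = 2 * m from by ring,
        show 2 * (m + 1) - 1 = 2 * m + 1 from by ring] at hh
    exact hh
  have hrp1 : ∀ m : ℤ,
      (R (2 * m + 1) : D) = (R (2 * (m + 1)) : D) * (C : D) * (R (2 * m) : D) - 1 := by
    intro m
    rw [heven' m]
    try abel
  have hQv : ∀ m : ℤ, (R (2 * m) : D) * (R (2 * (m + 1)) : D)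
      = (R (2 * (m + 1)) : D) * (C : D) * (R (2 * m) : D) + ((C⁻¹ : Dˣ) : D) - 1 := by
    intro m
    have hc := hcomm (2 * m)
    rw [hrp1 m] at hc
    have zc := sub_eq_zero_of_eq hc
    have key1 : ((R (2 * m) : D) * (R (2 * (m + 1)) : D) * (C : D) - 1) * (R (2 * m) : D)
          - ((R (2 * (m + 1)) : D) * (C : D) * (R (2 * m) : D) * (C : D) - (C : D)) * (R (2 * m) : D)
        = (R (2 * m) : D) * ((R (2 * (m + 1)) : D) * (C : D) * (R (2 * m) : D) - 1)
          - ((R (2 * (m + 1)) : D) * (C : D) * (R (2 * m) : D) - 1) * (C : D) * (R (2 * m) : D) := by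
      noncomm_ring
    rw [zc] at key1
    have e3 : (R (2 * m) : D) * (R (2 * (m + 1)) : D) * (C : D) - 1
        = (R (2 * (m + 1)) : D) * (C : D) * (R (2 * m) : D) * (C : D) - (C : D) :=
      mul_right_cancel₀ (Units.ne_zero (R (2 * m))) (sub_eq_zero.mp key1)
    have ze3 := sub_eq_zero_of_eq e3
    have zCC : (C : D) * ((C⁻¹ : Dˣ) : D) - 1 = 0 := sub_eq_zero_of_eq (Units.mul_inv C)
    have key2 : (R (2 * m) : D) * (R (2 * (m + 1)) : D)
          - ((R (2 * (m + 1)) : D) * (C : D) * (R (2 * m) : D) + ((C⁻¹ : Dˣ) : D) - 1)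
        = ((R (2 * m) : D) * (R (2 * (m + 1)) : D) * (C : D) - 1
            - ((R (2 * (m + 1)) : D) * (C : D) * (R (2 * m) : D) * (C : D) - (C : D))) * ((C⁻¹ : Dˣ) : D)
          - (R (2 * m) : D) * (R (2 * (m + 1)) : D) * ((C : D) * ((C⁻¹ : Dˣ) : D) - 1)
          + (R (2 * (m + 1)) : D) * (C : D) * (R (2 * m) : D) * ((C : D) * ((C⁻¹ : Dˣ) : D) - 1)
          - ((C : D) * ((C⁻¹ : Dˣ) : D) - 1) := by
      noncomm_ring
    rw [ze3, zCC] at key2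
    simp only [zero_mul, mul_zero, sub_zero, add_zero, zero_add] at key2
    exact sub_eq_zero.mp key2
  have hrp2 : ∀ m : ℤ,
      (R (2 * m + 1) : D) = (R (2 * m) : D) * (R (2 * (m + 1)) : D) - ((C⁻¹ : Dˣ) : D) := by
    intro m
    rw [hrp1 m]
    have z := sub_eq_zero_of_eq (hQv m)
    have key : ((R (2 * (m + 1)) : D) * (C : D) * (R (2 * m) : D) - 1)
          - ((R (2 * m) : D) * (R (2 * (m + 1)) : D) - ((C⁻¹ : Dˣ) : D))
        = -((R (2 * m) : D) * (R (2 * (m + 1)) : D)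
            - ((R (2 * (m + 1)) : D) * (C : D) * (R (2 * m) : D) + ((C⁻¹ : Dˣ) : D) - 1)) := by
      noncomm_ring
    rw [z] at key
    simp only [neg_zero] at key
    exact sub_eq_zero.mp key
  have hrm1 : ∀ m : ℤ,
      (R (2 * m - 1) : D) = (R (2 * m) : D) * (C : D) * (R (2 * (m - 1)) : D) - 1 := by
    intro m
    have hh := hrp1 (m - 1)
    rw [show 2 * (m - 1) + 1 = 2 * m - 1 from by ring,
        show m - 1 + 1 = m from by ring] at hh
    exact hh
  have hrm2 : ∀ m : ℤ,
      (R (2 * m - 1) : D) = (R (2 * (m - 1)) : D) * (R (2 * m) : D) - ((C⁻¹ : Dˣ) : D) := by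
    intro m
    have hh := hrp2 (m - 1)
    rw [show 2 * (m - 1) + 1 = 2 * m - 1 from by ring,
        show m - 1 + 1 = m from by ring] at hh
    exact hh
  have hEv : ∀ m : ℤ, (R (2 * (m + 1)) : D)
        * ((C : D) * (R (2 * (m - 1)) : D) * (R (2 * m) : D) - 1)
      = (R (2 * m) : D) * (R (2 * m) : D) * (R (2 * m) : D) + (C : D) * (R (2 * (m - 1)) : D) := by
    intro m
    have hh := h3 m
    rw [hrp1 m, hrm2 m] at hh
    have hq := hQv (m - 1)
    rw [show m - 1 + 1 = m from by ring] at hq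
    have zh := sub_eq_zero_of_eq hh
    have zq := sub_eq_zero_of_eq hq
    have zC : (C : D) * ((C⁻¹ : Dˣ) : D) - 1 = 0 := sub_eq_zero_of_eq (Units.mul_inv C)
    have key : ((R (2 * (m + 1)) : D) * ((C : D) * (R (2 * (m - 1)) : D) * (R (2 * m) : D) - 1)
          - ((R (2 * m) : D) * (R (2 * m) : D) * (R (2 * m) : D)
              + (C : D) * (R (2 * (m - 1)) : D))) * (R (2 * m) : D)
        = (((R (2 * (m + 1)) : D) * (C : D) * (R (2 * m) : D) - 1) * (C : D)
              * ((R (2 * (m - 1)) : D) * (R (2 * m) : D) - ((C⁻¹ : Dˣ) : D))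
            - (1 + (R (2 * m) : D) ^ 4))
          + (R (2 * (m + 1)) : D) * (C : D) * (R (2 * m) : D) * ((C : D) * ((C⁻¹ : Dˣ) : D) - 1)
          - ((C : D) * ((C⁻¹ : Dˣ) : D) - 1)
          + (R (2 * (m + 1)) : D) * (C : D)
            * ((R (2 * (m - 1)) : D) * (R (2 * m) : D)
                - ((R (2 * m) : D) * (C : D) * (R (2 * (m - 1)) : D) + ((C⁻¹ : Dˣ) : D) - 1))
            * (R (2 * m) : D)
          + (R (2 * (m + 1)) : D) * ((C : D) * ((C⁻¹ : Dˣ) : D) - 1) * (R (2 * m) : D) := by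
      noncomm_ring
    rw [zh, zq, zC] at key
    simp only [zero_mul, mul_zero, sub_zero, add_zero, zero_add] at key
    exact sub_eq_zero.mp ((mul_eq_zero.mp key).resolve_right (Units.ne_zero (R (2 * m))))
  have hE'v : ∀ m : ℤ, (R (2 * m) : D) * (R (2 * (m + 1)) : D) * (C : D) * (R (2 * (m - 1)) : D)
        - (R (2 * (m + 1)) : D) * (C : D)
      = (R (2 * m) : D) * (R (2 * m) : D) * (R (2 * m) : D) + (R (2 * (m - 1)) : D) := by
    intro m
    have hh := h3 m
    rw [hrp2 m, hrm1 m] at hh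
    have zh := sub_eq_zero_of_eq hh
    have zq := sub_eq_zero_of_eq (hQv m)
    have zC : ((C⁻¹ : Dˣ) : D) * (C : D) - 1 = 0 := sub_eq_zero_of_eq (Units.inv_mul C)
    have key : (R (2 * m) : D)
          * ((R (2 * m) : D) * (R (2 * (m + 1)) : D) * (C : D) * (R (2 * (m - 1)) : D)
              - (R (2 * (m + 1)) : D) * (C : D)
              - ((R (2 * m) : D) * (R (2 * m) : D) * (R (2 * m) : D) + (R (2 * (m - 1)) : D)))
        = (((R (2 * m) : D) * (R (2 * (m + 1)) : D) - ((C⁻¹ : Dˣ) : D)) * (C : D)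
              * ((R (2 * m) : D) * (C : D) * (R (2 * (m - 1)) : D) - 1)
            - (1 + (R (2 * m) : D) ^ 4))
          + (R (2 * m) : D)
            * ((R (2 * m) : D) * (R (2 * (m + 1)) : D)
                - ((R (2 * (m + 1)) : D) * (C : D) * (R (2 * m) : D) + ((C⁻¹ : Dˣ) : D) - 1))
            * ((C : D) * (R (2 * (m - 1)) : D))
          + (((C⁻¹ : Dˣ) : D) * (C : D) - 1)
            * ((R (2 * m) : D) * (C : D) * (R (2 * (m - 1)) : D))
          + (R (2 * m) : D) * (((C⁻¹ : Dˣ) : D) * (C : D) - 1) * (R (2 * (m - 1)) : D)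
          - (((C⁻¹ : Dˣ) : D) * (C : D) - 1) := by
      noncomm_ring
    rw [zh, zq, zC] at key
    simp only [zero_mul, mul_zero, sub_zero, add_zero, zero_add] at key
    have e := (mul_eq_zero.mp key).resolve_left (Units.ne_zero (R (2 * m)))
    have e2 := sub_eq_zero.mp e
    exact e2
  have hinvv : ∀ m : ℤ,
      (C : D) * (R (2 * m) : D) * (R (2 * (m + 1)) : D) - 1 ≠ 0 := by
    intro m
    have e : ((C * R (2 * m + 1) : Dˣ) : D)
        = (C : D) * (R (2 * m) : D) * (R (2 * (m + 1)) : D) - 1 := by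
      rw [Units.val_mul, hrp2 m, mul_sub, Units.mul_inv]
      noncomm_ring
    intro hz
    exact (C * R (2 * m + 1)).ne_zero (by rw [e, hz])
  have hR1v : (R 1 : D) = (Y : D) * (X : D) * ((Y⁻¹ : Dˣ) : D) := by
    rw [hR1]; simp [Units.val_mul]
  have hu1v : (R (2 * 1) : D) = (Y : D) := by
    rw [show (2 : ℤ) * 1 = 2 from by norm_num, hR2]
  have hu0v : (R (2 * 0) : D)
      = (Y : D) * (X : D) * ((Y⁻¹ : Dˣ) : D) * ((X⁻¹ : Dˣ) : D) * ((Y⁻¹ : Dˣ) : D)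
        + (Y : D) * (X : D) * ((Y⁻¹ : Dˣ) : D) * ((Y⁻¹ : Dˣ) : D) := by
    have h00 := heven' 0
    rw [show (0 : ℤ) + 1 = 1 from by norm_num, show (2 : ℤ) * 1 = 2 from by norm_num,
        show (2 : ℤ) * 0 = 0 from by norm_num, show (0 : ℤ) + 1 = 1 from by norm_num,
        hR2, hR1v] at h00
    have hne : (Y : D) * (C : D) ≠ 0 := mul_ne_zero (Units.ne_zero Y) (Units.ne_zero C)
    rw [show (2 : ℤ) * 0 = 0 from by norm_num]
    apply mul_left_cancel₀ hne
    rw [h00, htv]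
    simp only [mul_add, add_mul, mul_assoc, one_mul, mul_one, sX, sX', sY, sY',
      Units.mul_inv, Units.inv_mul]
    try abel
  have hr3v : (R 3 : D) = ((X⁻¹ : Dˣ) : D)
      + (Y : D) * (Y : D) * (Y : D) * (Y : D) * ((X⁻¹ : Dˣ) : D) := by
    have hh := h3 1
    rw [show (2 : ℤ) * 1 + 1 = 3 from by norm_num, show (2 : ℤ) * 1 - 1 = 1 from by norm_num,
        show (2 : ℤ) * 1 = 2 from by norm_num, hR2, hR1v] at hh
    apply mul_right_cancel₀ (Units.ne_zero X)
    have e : (R 3 : D) * (X : D)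
        = (R 3 : D) * (C : D) * ((Y : D) * (X : D) * ((Y⁻¹ : Dˣ) : D)) := by
      rw [htv]
      simp only [mul_assoc, sX, sX', sY, sY', Units.mul_inv, Units.inv_mul, mul_one, one_mul]
    rw [e, hh]
    simp only [mul_add, add_mul, mul_assoc, one_mul, mul_one, sX, sX', sY, sY',
      Units.mul_inv, Units.inv_mul, pow_succ, pow_zero]
    try abel
  have hu2v : (R (2 * 2) : D)
      = (X : D) * ((Y⁻¹ : Dˣ) : D) * ((X⁻¹ : Dˣ) : D)
        + ((Y⁻¹ : Dˣ) : D) * ((X⁻¹ : Dˣ) : D)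
        + (Y : D) * (Y : D) * (Y : D) * ((X⁻¹ : Dˣ) : D) := by
    have hh := heven' 1
    rw [show (1 : ℤ) + 1 = 2 from by norm_num, show (2 : ℤ) * 1 + 1 = 3 from by norm_num,
        show (2 : ℤ) * 1 = 2 from by norm_num, hR2, hr3v] at hh
    apply mul_right_cancel₀ (Units.ne_zero C)
    apply mul_right_cancel₀ (Units.ne_zero Y)
    rw [hh, htv]
    simp only [mul_add, add_mul, mul_assoc, one_mul, mul_one, sX, sX', sY, sY',
      Units.mul_inv, Units.inv_mul]
    try abel
  exact onefour_aux (X : D) ((X⁻¹ : Dˣ) : D) (Y : D) ((Y⁻¹ : Dˣ) : D) (C : D)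
    ((C⁻¹ : Dˣ) : D) (Units.mul_inv X) (Units.inv_mul X) (Units.mul_inv Y) (Units.inv_mul Y)
    htv ht'v (fun m => ((R (2 * m) : Dˣ) : D)) hinvv hQv hEv hE'v hu0v hu1v hu2v
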